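/- For n = 3, let I_{0,0}(t) = I_0(t) = ∑_{d≥0} (3d)!/(d!)^3 e^{dt}, let I_{0,1}(t) = t I_0(t) + ∑_{d≥1} e^{dt} (3d)!/(d!)^3 ∑_{r=d+1}^{3d} 3/r, and let I_{1,1} = d/dt(I_{0,1}/I_{0,0}). Setting f(x) = ∑_{d≥0} (3d)!/(d!)^3 x^d ∈ ℚ[[x]] and letting g be I_{1,1} written as a series in x = e^t, one has f(x)^2 · g(x) · (1 - 27x) = 1, i.e. I_{0,0}(t)^2 · I_{1,1}(t) · (1 - 27 e^t) = 1. -/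

import Mathlib

open PowerSeries

noncomputable section

/-- The hypergeometric term `∏_{r=1}^{nd}(nw+r) / ∏_{r=1}^{d}((w+r)^n - w^n)`,
as a formal power series in `w` over `ℚ` (the denominator has nonzero constant
term, so its power-series inverse is the honest inverse). -/
def hgTerm (n d : ℕ) : PowerSeries ℚ :=
  (∏ r ∈ Finset.Icc 1 (n * d), ((n : ℚ) • (X : PowerSeries ℚ) + C (r : ℚ))) *
    (∏ r ∈ Finset.Icc 1 d, (((X : PowerSeries ℚ) + C (r : ℚ)) ^ n - X ^ n))⁻¹

/-- The `t`-derivative on `ℚ[[e^t]]`, i.e. `e^{dt} ↦ d·e^{dt}` on the power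
series ring in the variable `x = e^t`. -/
def Dq (f : PowerSeries ℚ) : PowerSeries ℚ :=
  PowerSeries.mk fun d => (d : ℚ) * PowerSeries.coeff d f

/-- The `t`-derivative on polynomials in `t` with coefficients in `ℚ[[e^t]]`:
it acts as `d/dt` on the variable `t` and as `Dq` on the coefficients. -/
def ddt (p : Polynomial (PowerSeries ℚ)) : Polynomial (PowerSeries ℚ) :=
  Polynomial.derivative p + p.sum fun a b => Polynomial.C (Dq b) * Polynomial.X ^ a

/-- `I_{0,q}(t)`: the coefficient of `w^q` in
`e^{wt} ∑_{d≥0} e^{dt} ∏_{r=1}^{nd}(nw+r)/∏_{r=1}^{d}((w+r)^n - w^n)`,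
a polynomial in `t` with coefficients in `ℚ[[e^t]]`. -/
def I0 (n q : ℕ) : Polynomial (PowerSeries ℚ) :=
  ∑ a ∈ Finset.range (q + 1),
    Polynomial.C ((Nat.factorial a : ℚ)⁻¹ •
        PowerSeries.mk fun d => PowerSeries.coeff (q - a) (hgTerm n d)) *
      Polynomial.X ^ a

/-- `I_{p,q}(t)`, defined by `I_{p,q} = d/dt (I_{p-1,q} / I_{p-1,p-1})`; the
diagonal entry `I_{p-1,p-1}` is a power series in `e^t` (a constant polynomial
in `t`), and division by it is division by its constant (in `t`) coefficient. -/
def Ipq (n : ℕ) : ℕ → ℕ → Polynomial (PowerSeries ℚ)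
  | 0, q => I0 n q
  | p + 1, q => ddt (Ipq n p q * Polynomial.C (((Ipq n p p).coeff 0)⁻¹))

/-! ### Basic properties of `Dq` -/

@[simp] lemma Dq_coeff (n : ℕ) (f : PowerSeries ℚ) :
    coeff n (Dq f) = n * coeff n f := by simp [Dq]

@[simp] lemma Dq_zero : Dq 0 = 0 := by ext n; simp

@[simp] lemma Dq_one : Dq 1 = 0 := by
  ext n; rcases n with _ | n <;> simp [coeff_one]

lemma Dq_add (f g : PowerSeries ℚ) : Dq (f + g) = Dq f + Dq g := by
  ext n; simp; ring

lemma Dq_sub (f g : PowerSeries ℚ) : Dq (f - g) = Dq f - Dq g := by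
  ext n; simp; ring

lemma Dq_mul (f g : PowerSeries ℚ) : Dq (f * g) = Dq f * g + f * Dq g := by
  ext n
  simp only [Dq_coeff, map_add, coeff_mul, Finset.mul_sum, ← Finset.sum_add_distrib]
  refine Finset.sum_congr rfl fun p hp => ?_
  rw [Finset.HasAntidiagonal.mem_antidiagonal] at hp
  have : (n : ℚ) = p.1 + p.2 := by exact_mod_cast congrArg (Nat.cast : ℕ → ℚ) hp.symm
  rw [this]; ring

@[simp] lemma Dq_X : Dq (X : PowerSeries ℚ) = X := by
  ext n; simp [coeff_X]; rcases n with _ | _ | n <;> simp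

@[simp] lemma Dq_C (c : ℚ) : Dq (C c) = 0 := by
  ext n; simp [coeff_C]; intro h; simp [h]

lemma coeff_one_mul' (f g : PowerSeries ℚ) :
    coeff 1 (f * g) =
      constantCoeff f * coeff 1 g + coeff 1 f * constantCoeff g := by
  rw [coeff_mul]
  rw [show (Finset.HasAntidiagonal.antidiagonal 1 : Finset (ℕ × ℕ)) = {(0,1),(1,0)} by decide]
  simp [coeff_zero_eq_constantCoeff]

/-! ### The factors of `hgTerm 3 d` -/

def Tl (r : ℕ) : PowerSeries ℚ := ((3 : ℕ) : ℚ) • (X : PowerSeries ℚ) + C (r : ℚ)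

def Qd (r : ℕ) : PowerSeries ℚ := ((X : PowerSeries ℚ) + C (r : ℚ)) ^ 3 - X ^ 3

lemma hgTerm_eq (d : ℕ) :
    hgTerm 3 d = (∏ r ∈ Finset.Icc 1 (3 * d), Tl r) *
      (∏ r ∈ Finset.Icc 1 d, Qd r)⁻¹ := rfl

@[simp] lemma cc_Tl (r : ℕ) : constantCoeff (Tl r) = r := by
  simp [Tl, smul_eq_C_mul]

@[simp] lemma coeff_succ_natCast (n r : ℕ) : coeff (n + 1) ((r : ℚ⟦X⟧)) = 0 := by
  rw [← map_natCast (C (R := ℚ)) r, coeff_C]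
  simp

@[simp] lemma c1_Tl (r : ℕ) : coeff 1 (Tl r) = 3 := by
  simp [Tl, smul_eq_C_mul, coeff_C]

lemma Qd_expand (r : ℕ) :
    Qd r = C ((r : ℚ) ^ 3) + C (3 * (r : ℚ) ^ 2) * X + C (3 * (r : ℚ)) * X ^ 2 := by
  unfold Qd
  simp only [map_mul, map_pow, map_ofNat]
  ring

@[simp] lemma cc_Qd (r : ℕ) : constantCoeff (Qd r) = (r : ℚ) ^ 3 := by
  simp [Qd]

@[simp] lemma c1_Qd (r : ℕ) : coeff 1 (Qd r) = 3 * (r : ℚ) ^ 2 := by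
  rw [Qd_expand]
  simp only [map_add, coeff_C_mul, coeff_X_pow, coeff_C]
  norm_num

lemma cc_prodQd (d : ℕ) :
    constantCoeff (∏ r ∈ Finset.Icc 1 d, Qd r) ≠ 0 := by
  rw [map_prod]
  rw [Finset.prod_ne_zero_iff]
  intro r hr
  rw [Finset.mem_Icc] at hr
  simp only [cc_Qd]
  have : (r : ℚ) ≠ 0 := Nat.cast_ne_zero.mpr (by omega)
  positivity

/-- The fundamental recurrence for `hgTerm 3`. -/
lemma hgTerm_rec (d : ℕ) :
    hgTerm 3 (d + 1) * Qd (d + 1) =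
      hgTerm 3 d * (Tl (3 * d + 1) * Tl (3 * d + 2) * Tl (3 * d + 3)) := by
  have hA : (∏ r ∈ Finset.Icc 1 (3 * (d + 1)), Tl r) =
      (∏ r ∈ Finset.Icc 1 (3 * d), Tl r) *
        Tl (3 * d + 1) * Tl (3 * d + 2) * Tl (3 * d + 3) := by
    rw [show 3 * (d + 1) = (3 * d + 2) + 1 by ring,
      Finset.prod_Icc_succ_top (by omega),
      show 3 * d + 2 = (3 * d + 1) + 1 from rfl,
      Finset.prod_Icc_succ_top (by omega),
      show 3 * d + 1 = (3 * d) + 1 from rfl,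
      Finset.prod_Icc_succ_top (by omega)]
  have hB : (∏ r ∈ Finset.Icc 1 (d + 1), Qd r) =
      (∏ r ∈ Finset.Icc 1 d, Qd r) * Qd (d + 1) :=
    Finset.prod_Icc_succ_top (by omega) _
  have hq : (Qd (d + 1))⁻¹ * Qd (d + 1) = 1 := by
    apply PowerSeries.inv_mul_cancel
    simp only [cc_Qd]
    have : ((d : ℚ) + 1) ≠ 0 := by positivity
    push_cast
    positivity
  rw [hgTerm_eq, hgTerm_eq, hA, hB, PowerSeries.mul_inv_rev]
  linear_combination ((∏ r ∈ Finset.Icc 1 (3 * d), Tl r) * Tl (3 * d + 1) *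
    Tl (3 * d + 2) * Tl (3 * d + 3) * (∏ r ∈ Finset.Icc 1 d, Qd r)⁻¹) * hq

/-! ### The coefficient sequences -/

def aa (d : ℕ) : ℚ := coeff 0 (hgTerm 3 d)
def hh (d : ℕ) : ℚ := coeff 1 (hgTerm 3 d)

lemma hgTerm_zero : hgTerm 3 0 = 1 := by
  rw [hgTerm_eq]
  simp

@[simp] lemma aa_zero : aa 0 = 1 := by simp [aa, hgTerm_zero]
@[simp] lemma hh_zero : hh 0 = 0 := by simp [hh, hgTerm_zero, coeff_one]

lemma Ra (d : ℕ) :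
    aa (d + 1) * ((d : ℚ) + 1) ^ 3 =
      aa d * ((3 * (d : ℚ) + 1) * (3 * (d : ℚ) + 2) * (3 * (d : ℚ) + 3)) := by
  have h := congrArg (coeff 0) (hgTerm_rec d)
  simp only [coeff_zero_eq_constantCoeff, map_mul, cc_Tl, cc_Qd] at h
  unfold aa
  simp only [coeff_zero_eq_constantCoeff]
  push_cast at h ⊢
  linear_combination h

lemma Rh (d : ℕ) :
    aa (d + 1) * (3 * ((d : ℚ) + 1) ^ 2) + hh (d + 1) * ((d : ℚ) + 1) ^ 3 =
      aa d * (3 * ((3 * (d : ℚ) + 1) * (3 * (d : ℚ) + 2) +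
          (3 * (d : ℚ) + 1) * (3 * (d : ℚ) + 3) +
          (3 * (d : ℚ) + 2) * (3 * (d : ℚ) + 3))) +
        hh d * ((3 * (d : ℚ) + 1) * (3 * (d : ℚ) + 2) * (3 * (d : ℚ) + 3)) := by
  have h := congrArg (coeff 1) (hgTerm_rec d)
  rw [coeff_one_mul', coeff_one_mul'] at h
  rw [coeff_one_mul' (Tl (3 * d + 1) * Tl (3 * d + 2)), coeff_one_mul'] at h
  simp only [map_mul, cc_Tl, cc_Qd, c1_Tl, c1_Qd,
    coeff_zero_eq_constantCoeff] at h
  unfold aa hh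
  simp only [coeff_zero_eq_constantCoeff]
  push_cast at h ⊢
  linear_combination h

lemma key1 (d : ℕ) :
    ((d : ℚ) + 1) ^ 2 * aa (d + 1) = 3 * (3 * (d : ℚ) + 1) * (3 * (d : ℚ) + 2) * aa d := by
  have hne : ((d : ℚ) + 1) ≠ 0 := by positivity
  apply mul_left_cancel₀ hne
  linear_combination Ra d

lemma key2 (d : ℕ) :
    2 * ((d : ℚ) + 1) * aa (d + 1) + ((d : ℚ) + 1) ^ 2 * hh (d + 1) =
      3 * (3 * (d : ℚ) + 1) * (3 * (d : ℚ) + 2) * hh d + (54 * (d : ℚ) + 27) * aa d := by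
  have hne : ((d : ℚ) + 1) ≠ 0 := by positivity
  apply mul_left_cancel₀ hne
  linear_combination Rh d - key1 d

/-! ### The power series `A`, `H` and the ODEs -/

def AA : PowerSeries ℚ := PowerSeries.mk fun d => coeff 0 (hgTerm 3 d)
def HH : PowerSeries ℚ := PowerSeries.mk fun d => coeff 1 (hgTerm 3 d)

@[simp] lemma coeff_AA (d : ℕ) : coeff d AA = aa d := by simp [AA, aa]
@[simp] lemma coeff_HH (d : ℕ) : coeff d HH = hh d := by simp [HH, hh]

@[simp] lemma cc_Dq (f : PowerSeries ℚ) : constantCoeff (Dq f) = 0 := by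
  rw [← coeff_zero_eq_constantCoeff]; simp

lemma coeff_succ_one_sub_mul (g : PowerSeries ℚ) (e : ℕ) :
    coeff (e + 1) ((1 - 27 * X) * g) = coeff (e + 1) g - 27 * coeff e g := by
  rw [sub_mul, one_mul, map_sub, mul_assoc]
  rw [show ((27 : ℚ⟦X⟧)) = C 27 by simp [map_ofNat]]
  rw [coeff_C_mul, coeff_succ_X_mul]

lemma coeff_succ_X_mul' (g : PowerSeries ℚ) (c : ℚ) (e : ℕ) :
    coeff (e + 1) ((C c) * X * g) = c * coeff e g := by
  rw [mul_assoc, coeff_C_mul, coeff_succ_X_mul]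

lemma ode1 : (1 - 27 * X) * Dq (Dq AA) = C 27 * X * Dq AA + C 6 * X * AA := by
  ext n
  rcases n with _ | e
  · simp only [coeff_zero_eq_constantCoeff, map_mul, map_sub, map_one, map_add,
      constantCoeff_X, cc_Dq]
    ring
  · rw [coeff_succ_one_sub_mul, map_add, coeff_succ_X_mul', coeff_succ_X_mul']
    simp only [Dq_coeff, coeff_AA]
    push_cast
    linear_combination key1 e

lemma ode2 : (1 - 27 * X) * (2 * Dq AA + Dq (Dq HH)) =
    C 27 * X * AA + C 27 * X * Dq HH + C 6 * X * HH := by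
  ext n
  rcases n with _ | e
  · simp only [coeff_zero_eq_constantCoeff, map_mul, map_sub, map_one, map_add,
      constantCoeff_X, cc_Dq]
    ring
  · rw [coeff_succ_one_sub_mul]
    rw [show ((2 : ℚ⟦X⟧)) = C 2 by simp [map_ofNat]]
    simp only [map_add, coeff_C_mul]
    rw [coeff_succ_X_mul', coeff_succ_X_mul', coeff_succ_X_mul']
    simp only [Dq_coeff, coeff_AA, coeff_HH]
    push_cast
    linear_combination key2 e

/-! ### The Wronskian -/

def WW : PowerSeries ℚ := AA * AA + AA * Dq HH - HH * Dq AA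

lemma cc_AA : constantCoeff AA = 1 := by
  rw [← coeff_zero_eq_constantCoeff]; simp

lemma wronskian_eq : (1 - 27 * X) * WW = 1 := by
  have hDqW : Dq WW = 2 * (AA * Dq AA) + AA * Dq (Dq HH) - HH * Dq (Dq AA)
      := by
    unfold WW
    rw [Dq_sub, Dq_add, Dq_mul, Dq_mul, Dq_mul]
    ring
  have hZ : Dq ((1 - 27 * X) * WW) = 0 := by
    have hD27 : Dq (27 : ℚ⟦X⟧) = 0 := by
      rw [show (27 : ℚ⟦X⟧) = C 27 by simp [map_ofNat]]; exact Dq_C _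
    rw [Dq_mul, Dq_sub, Dq_one, Dq_mul, hDqW, hD27, Dq_X]
    have h27 : (27 : ℚ⟦X⟧) = C 27 := by simp [map_ofNat]
    have h6 : (6 : ℚ⟦X⟧) = C 6 := by simp [map_ofNat]
    have o1 := ode1
    have o2 := ode2
    rw [← h27, ← h6] at o1 o2
    unfold WW
    linear_combination AA * o2 - HH * o1
  ext n
  rcases n with _ | e
  · rw [coeff_zero_eq_constantCoeff, map_mul, map_sub, map_one, map_mul,
      constantCoeff_X, mul_zero, sub_zero, one_mul]
    unfold WW
    simp only [map_sub, map_add, map_mul, cc_AA, cc_Dq]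
    ring
  · have h := congrArg (coeff (e + 1)) hZ
    simp only [Dq_coeff, map_zero] at h
    have hne : ((e : ℚ) + 1) ≠ 0 := by positivity
    have : coeff (e + 1) ((1 - 27 * X) * WW) = 0 := by
      have := h
      push_cast at this
      exact (mul_eq_zero.mp this).resolve_left hne
    rw [this]
    simp [coeff_one]

/-! ### Identification of the coefficients of `I` -/

lemma Ipq00 : (Ipq 3 0 0).coeff 0 = AA := by
  show (I0 3 0).coeff 0 = AA
  unfold I0
  simp [AA, Nat.factorial]

lemma coeff_sumDq (p : Polynomial (PowerSeries ℚ)) (k : ℕ) :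
    (p.sum fun a b => Polynomial.C (Dq b) * Polynomial.X ^ a).coeff k = Dq (p.coeff k) := by
  rw [Polynomial.sum_def, Polynomial.finset_sum_coeff]
  simp only [Polynomial.coeff_C_mul, Polynomial.coeff_X_pow, mul_ite, mul_one, mul_zero]
  rw [Finset.sum_ite_eq p.support k (fun a => Dq (p.coeff a))]
  by_cases hk : k ∈ p.support
  · simp [hk]
  · simp [hk, Polynomial.notMem_support_iff.mp hk]

lemma coeff_zero_ddt (p : Polynomial (PowerSeries ℚ)) :
    (ddt p).coeff 0 = p.coeff 1 + Dq (p.coeff 0) := by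
  unfold ddt
  rw [Polynomial.coeff_add, coeff_sumDq]
  congr 1
  rw [Polynomial.coeff_derivative]
  push_cast
  ring

lemma I01_eq : Ipq 3 0 1 = Polynomial.C HH + Polynomial.C AA * Polynomial.X := by
  show I0 3 1 = _
  unfold I0
  rw [Finset.sum_range_succ, Finset.sum_range_one]
  simp [AA, HH, Nat.factorial]

lemma Ipq11 : (Ipq 3 1 1).coeff 0 = 1 + Dq (HH * AA⁻¹) := by
  have hAinv : AA * AA⁻¹ = 1 :=
    PowerSeries.mul_inv_cancel _ (by rw [cc_AA]; exact one_ne_zero)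
  have : Ipq 3 1 1 = ddt (Ipq 3 0 1 * Polynomial.C (((Ipq 3 0 0).coeff 0)⁻¹)) := rfl
  rw [this, coeff_zero_ddt, Ipq00, I01_eq]
  rw [Polynomial.coeff_mul_C, Polynomial.coeff_mul_C]
  simp only [Polynomial.coeff_add, Polynomial.coeff_C]
  norm_num [hAinv]

/-! ### Main theorem -/

/-- The `n = 3` case: `I_{0,0}(t) = ∑_{d≥0} (3d)!/(d!)^3 e^{dt}` and, with
`I_{1,1} = d/dt(I_{0,1}/I_{0,0})` given by the hypergeometric recursion,
`I_{0,0}(t)^2 · I_{1,1}(t) · (1 - 27 e^t) = 1` (the `n = 3` case of the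
identities (3.4) and (3.6)). -/
theorem stmt17 :
    (Ipq 3 0 0).coeff 0 =
        (PowerSeries.mk fun d =>
          (Nat.factorial (3 * d) : ℚ) / (Nat.factorial d : ℚ) ^ 3) ∧
    ((Ipq 3 0 0).coeff 0) ^ 2 * ((Ipq 3 1 1).coeff 0) *
        (1 - PowerSeries.C (27 : ℚ) * X) = 1 := by
  constructor
  · rw [Ipq00]
    ext d
    simp only [coeff_AA, coeff_mk]
    unfold aa
    rw [hgTerm_eq, coeff_zero_eq_constantCoeff, map_mul, map_prod,
      PowerSeries.constantCoeff_inv, map_prod]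
    simp only [cc_Tl, cc_Qd]
    have hfac : ∀ n : ℕ, (∏ r ∈ Finset.Icc 1 n, (r : ℚ)) = (Nat.factorial n : ℚ) := by
      intro n
      rw [← Nat.cast_prod]
      congr 1
      rw [← Finset.Ico_add_one_right_eq_Icc]
      exact Finset.prod_Ico_id_eq_factorial n
    rw [hfac, Finset.prod_pow, hfac, div_eq_mul_inv]
  · rw [Ipq00, Ipq11]
    have hAinv : AA * AA⁻¹ = 1 :=
      PowerSeries.mul_inv_cancel _ (by rw [cc_AA]; exact one_ne_zero)
    have hinvD : Dq AA * AA⁻¹ + AA * Dq AA⁻¹ = 0 := by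
      have h := congrArg Dq hAinv
      rw [Dq_mul, Dq_one] at h
      exact h
    have hW : AA ^ 2 * (1 + Dq (HH * AA⁻¹)) = WW := by
      rw [Dq_mul]
      unfold WW
      linear_combination (AA * Dq HH - HH * Dq AA) * hAinv + AA * HH * hinvD
    rw [hW]
    rw [show PowerSeries.C (27 : ℚ) = (27 : ℚ⟦X⟧) by simp [map_ofNat]]
    linear_combination wronskian_eq
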